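/- arXiv:1706.06478 — 6 statements merged into one kernel-verified Lean document; each statement's English description precedes it below -/
import Mathlib

section
/- Let p_f : ℝ → EuclideanSpace ℝ (Fin 3) be twice differentiable in a neighborhood of s₀ with ‖p_f'(s)‖ = 1 for all s, suppose k(s) := ‖p_f''(s)‖ ≠ 0 for all s in a neighborhood of s₀, and suppose the normal n(s) := p_f''(s)/k(s) is differentiable at s₀. Then n'(s₀) = −k(s₀) t(s₀) + τ(s₀) b(s₀), where t(s₀) := p_f'(s₀), b(s₀) := t(s₀) × n(s₀), and τ(s₀) := ⟪b(s₀), n'(s₀)⟫. -/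
open scoped RealInnerProductSpace Matrix

/-- Cross product on `EuclideanSpace ℝ (Fin 3)`. -/
noncomputable def cross3 (u v : EuclideanSpace ℝ (Fin 3)) : EuclideanSpace ℝ (Fin 3) :=
  (WithLp.equiv 2 (Fin 3 → ℝ)).symm
    ![u 1 * v 2 - u 2 * v 1, u 2 * v 0 - u 0 * v 2, u 0 * v 1 - u 1 * v 0]

/-- Tangent vector of an arc-length parameterized curve. -/
noncomputable def tang (p_f : ℝ → EuclideanSpace ℝ (Fin 3)) (s : ℝ) : EuclideanSpace ℝ (Fin 3) :=
  deriv p_f s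

/-- Curvature. -/
noncomputable def curv (p_f : ℝ → EuclideanSpace ℝ (Fin 3)) (s : ℝ) : ℝ :=
  ‖deriv (deriv p_f) s‖

/-- Normal vector. -/
noncomputable def nor (p_f : ℝ → EuclideanSpace ℝ (Fin 3)) (s : ℝ) : EuclideanSpace ℝ (Fin 3) :=
  (curv p_f s)⁻¹ • deriv (deriv p_f) s

/-- Binormal vector. -/
noncomputable def binor (p_f : ℝ → EuclideanSpace ℝ (Fin 3)) (s : ℝ) : EuclideanSpace ℝ (Fin 3) :=
  cross3 (tang p_f s) (nor p_f s)

/-- Torsion: `τ(s) = ⟪b(s), n'(s)⟫`. -/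
noncomputable def tors (p_f : ℝ → EuclideanSpace ℝ (Fin 3)) (s : ℝ) : ℝ :=
  ⟪binor p_f s, deriv (nor p_f) s⟫

/-! Since `t`, `n`, `b = t × n` form an orthonormal frame, `n' = ⟪t, n'⟫ t + ⟪n, n'⟫ n + τ b`.
Differentiating `‖n‖ = 1` gives `⟪n, n'⟫ = 0`, and differentiating `⟪t, n⟫ = 0` gives
`⟪t, n'⟫ = -⟪t', n⟫ = -k`. Both identities hold near `s₀` because `k ≠ 0` there. -/

/-- Expanding `b × (b × v)` with `b = t × n` in two ways by the vector triple product. -/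
theorem cross_frame_repr {R : Type*} [CommRing R] {t n : Fin 3 → R} (ht : t ⬝ᵥ t = 1)
    (hn : n ⬝ᵥ n = 1) (htn : t ⬝ᵥ n = 0) (v : Fin 3 → R) :
    (t ⬝ᵥ v) • t + (n ⬝ᵥ v) • n + (t ⨯₃ n ⬝ᵥ v) • t ⨯₃ n = v := by
  have hbb : t ⨯₃ n ⬝ᵥ t ⨯₃ n = 1 := by
    rw [cross_dot_cross, ht, hn, htn, dotProduct_comm n t, htn]; ring
  have hbn : t ⨯₃ n ⨯₃ n = -t := by
    rw [cross_cross_eq_smul_sub_smul, htn, hn]; module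
  have hbt : t ⨯₃ n ⨯₃ t = n := by
    rw [cross_cross_eq_smul_sub_smul, ht, dotProduct_comm n t, htn]; module
  have key := cross_cross_eq_smul_sub_smul' (t ⨯₃ n) (t ⨯₃ n) v
  rw [hbb, cross_cross_eq_smul_sub_smul t n v, map_sub, map_smul, map_smul, hbn, hbt] at key
  linear_combination (norm := module) -key

theorem cross3_eq_toLp_cross (u v : EuclideanSpace ℝ (Fin 3)) :
    cross3 u v = WithLp.toLp 2 (WithLp.ofLp u ⨯₃ WithLp.ofLp v) := by
  rw [cross3, cross_apply]; rfl

theorem cross3_frame_repr {t n : EuclideanSpace ℝ (Fin 3)} (ht : ‖t‖ = 1) (hn : ‖n‖ = 1)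
    (htn : ⟪t, n⟫ = 0) (v : EuclideanSpace ℝ (Fin 3)) :
    ⟪t, v⟫ • t + ⟪n, v⟫ • n + ⟪cross3 t n, v⟫ • cross3 t n = v := by
  have hdot (u w : EuclideanSpace ℝ (Fin 3)) : ⟪u, w⟫ = WithLp.ofLp u ⬝ᵥ WithLp.ofLp w := by
    rw [EuclideanSpace.inner_eq_star_dotProduct, star_trivial, dotProduct_comm]
  have hunit {u : EuclideanSpace ℝ (Fin 3)} (hu : ‖u‖ = 1) :
      WithLp.ofLp u ⬝ᵥ WithLp.ofLp u = 1 := by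
    rw [← hdot, real_inner_self_eq_norm_sq, hu, one_pow]
  apply WithLp.ofLp_injective
  simpa only [hdot, cross3_eq_toLp_cross, WithLp.ofLp_add, WithLp.ofLp_smul, WithLp.ofLp_toLp]
    using cross_frame_repr (hunit ht) (hunit hn) (hdot t n ▸ htn) (WithLp.ofLp v)

section InnerDeriv

variable {E : Type*} [NormedAddCommGroup E] [InnerProductSpace ℝ E] {f g : ℝ → E} {x : ℝ}

theorem inner_deriv_add_inner_deriv_eq_zero (hf : DifferentiableAt ℝ f x)
    (hg : DifferentiableAt ℝ g x) {c : ℝ} (h : ∀ᶠ y in nhds x, ⟪f y, g y⟫ = c) :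
    ⟪deriv f x, g x⟫ + ⟪f x, deriv g x⟫ = 0 := by
  have hderiv := (hf.hasDerivAt.inner ℝ hg.hasDerivAt).deriv
  rw [Filter.EventuallyEq.deriv_eq (h : (fun y => ⟪f y, g y⟫) =ᶠ[nhds x] fun _ => c),
    deriv_const] at hderiv
  linarith

theorem inner_deriv_eq_zero_of_eventually_norm_eq (hf : DifferentiableAt ℝ f x) {r : ℝ}
    (h : ∀ᶠ y in nhds x, ‖f y‖ = r) : ⟪f x, deriv f x⟫ = 0 := by
  have h' : ∀ᶠ y in nhds x, ⟪f y, f y⟫ = r ^ 2 :=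
    h.mono fun y hy => by rw [real_inner_self_eq_norm_sq, hy]
  have := inner_deriv_add_inner_deriv_eq_zero hf hf h'
  rw [real_inner_comm] at this
  linarith

end InnerDeriv

section Frenet

variable {p : ℝ → EuclideanSpace ℝ (Fin 3)} {s : ℝ}

/-- `deriv` of a non-differentiable function is `0`, so `k ≠ 0` forces `t` to be differentiable. -/
theorem differentiableAt_deriv_of_curv_ne_zero (h : curv p s ≠ 0) :
    DifferentiableAt ℝ (deriv p) s :=
  differentiableAt_of_deriv_ne_zero (norm_ne_zero_iff.mp h)

theorem norm_nor_of_curv_ne_zero (h : curv p s ≠ 0) : ‖nor p s‖ = 1 := by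
  simp only [nor, curv, norm_smul, norm_inv, norm_norm] at h ⊢
  exact inv_mul_cancel₀ h

theorem inner_deriv_deriv_nor (p : ℝ → EuclideanSpace ℝ (Fin 3)) (s : ℝ) :
    ⟪deriv (deriv p) s, nor p s⟫ = curv p s := by
  rw [nor, real_inner_smul_right, real_inner_self_eq_norm_sq, ← curv, sq, inv_mul_eq_div,
    mul_self_div_self]

theorem inner_deriv_nor_of_curv_ne_zero (hunit : ∀ s, ‖deriv p s‖ = 1) (h : curv p s ≠ 0) :
    ⟪deriv p s, nor p s⟫ = 0 := by
  rw [nor, real_inner_smul_right, inner_deriv_eq_zero_of_eventually_norm_eq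
    (differentiableAt_deriv_of_curv_ne_zero h) (Filter.Eventually.of_forall hunit), mul_zero]

end Frenet

theorem serret_frenet_normal_derivative_general
    (p_f : ℝ → EuclideanSpace ℝ (Fin 3)) (s₀ : ℝ)
    (hunit : ∀ s : ℝ, ‖deriv p_f s‖ = 1)
    (hk : ∀ᶠ s in nhds s₀, curv p_f s ≠ 0)
    (hn : DifferentiableAt ℝ (nor p_f) s₀) :
    deriv (nor p_f) s₀ =
      (-(curv p_f s₀)) • tang p_f s₀ + tors p_f s₀ • binor p_f s₀ := by
  have hk₀ := hk.self_of_nhds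
  have htn' : ⟪deriv p_f s₀, deriv (nor p_f) s₀⟫ = -curv p_f s₀ := by
    have := inner_deriv_add_inner_deriv_eq_zero (differentiableAt_deriv_of_curv_ne_zero hk₀) hn
      (hk.mono fun _ => inner_deriv_nor_of_curv_ne_zero hunit)
    rw [inner_deriv_deriv_nor] at this
    linarith
  have hnn' :=
    inner_deriv_eq_zero_of_eventually_norm_eq hn (hk.mono fun _ => norm_nor_of_curv_ne_zero)
  have frame := cross3_frame_repr (hunit s₀) (norm_nor_of_curv_ne_zero hk₀)
    (inner_deriv_nor_of_curv_ne_zero hunit hk₀) (deriv (nor p_f) s₀)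
  rw [htn', hnn', zero_smul, add_zero] at frame
  exact frame.symm

theorem serret_frenet_normal_derivative
    (p_f : ℝ → EuclideanSpace ℝ (Fin 3)) (s₀ : ℝ)
    (hd1 : ∀ᶠ s in nhds s₀, DifferentiableAt ℝ p_f s)
    (hd2 : ∀ᶠ s in nhds s₀, DifferentiableAt ℝ (deriv p_f) s)
    (hunit : ∀ s : ℝ, ‖deriv p_f s‖ = 1)
    (hk : ∀ᶠ s in nhds s₀, curv p_f s ≠ 0)
    (hn : DifferentiableAt ℝ (nor p_f) s₀) :
    deriv (nor p_f) s₀ =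
      (-(curv p_f s₀)) • tang p_f s₀ + tors p_f s₀ • binor p_f s₀ :=
  serret_frenet_normal_derivative_general p_f s₀ hunit hk hn
end

section
/- Let p_f : ℝ → EuclideanSpace ℝ (Fin 3) be twice differentiable in a neighborhood of s₀ with ‖p_f'(s)‖ = 1 for all s, suppose k(s) := ‖p_f''(s)‖ ≠ 0 for all s in a neighborhood of s₀, and suppose the normal n(s) := p_f''(s)/k(s) is differentiable at s₀. Then the binormal b(s) := t(s) × n(s) is differentiable at s₀ and b'(s₀) = −τ(s₀) n(s₀), where τ(s₀) := ⟪b(s₀), n'(s₀)⟫. -/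
open scoped RealInnerProductSpace Matrix

/-!
Differentiating `b = t × n` gives `b' = t' × n + t × n' = t × n'`, because `t' = k n`.
Since `‖n‖ = 1` we have `n ⊥ n'`, and since `‖t‖ = 1` we have `t ⊥ t' = k n`. Hence
`n × (t × n') = ⟪n, n'⟫ t - ⟪t, n⟫ n' = 0`, so `t × n'` is a multiple of the unit vector `n`,
namely `⟪n, t × n'⟫ n = -⟪t × n, n'⟫ n = -τ n`.
-/

local notation "ℝ³" => EuclideanSpace ℝ (Fin 3)

section CrossProduct

open WithLp

lemma cross3_eq_toLp_crossProduct (u v : ℝ³) :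
    cross3 u v = toLp 2 (ofLp u ⨯₃ ofLp v) := rfl

lemma real_inner_eq_dotProduct (u v : ℝ³) : ⟪u, v⟫ = ofLp u ⬝ᵥ ofLp v := by
  rw [EuclideanSpace.inner_eq_star_dotProduct, star_trivial, dotProduct_comm]

lemma cross3_smul_self (k : ℝ) (u : ℝ³) : cross3 (k • u) u = 0 := by
  simp [cross3_eq_toLp_crossProduct, cross_self]

lemma inner_cross3_cross3_left (u v w : ℝ³) : ⟪u, cross3 v w⟫ = -⟪cross3 v u, w⟫ := by
  simp only [real_inner_eq_dotProduct, cross3_eq_toLp_crossProduct]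
  rw [triple_product_permutation, triple_product_permutation, ← cross_anticomm, dotProduct_neg,
    dotProduct_comm]

lemma cross3_cross3 (u v w : ℝ³) :
    cross3 u (cross3 v w) = ⟪u, w⟫ • v - ⟪v, u⟫ • w := by
  simp only [real_inner_eq_dotProduct, cross3_eq_toLp_crossProduct,
    cross_cross_eq_smul_sub_smul', toLp_sub, toLp_smul, toLp_ofLp]

noncomputable def cross3CLM : ℝ³ →L[ℝ] ℝ³ →L[ℝ] ℝ³ :=
  let e := WithLp.linearEquiv 2 ℝ (Fin 3 → ℝ)
  LinearMap.toContinuousBilinearMap <|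
    (crossProduct.compl₁₂ e.toLinearMap e.toLinearMap).compr₂ e.symm.toLinearMap

lemma cross3CLM_apply (u v : ℝ³) : cross3CLM u v = cross3 u v := rfl

lemma eq_inner_smul_of_cross3_eq_zero {n x : ℝ³} (hn : ‖n‖ = 1)
    (h : cross3 n x = 0) : x = ⟪n, x⟫ • n := by
  have h2 : cross3 n (cross3 n x) = ⟪n, x⟫ • n - x := by
    rw [cross3_cross3, real_inner_self_eq_norm_sq, hn, one_pow, one_smul]
  rw [h, cross3_eq_toLp_crossProduct, ofLp_zero, map_zero, toLp_zero] at h2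
  exact (sub_eq_zero.mp h2.symm).symm

end CrossProduct

lemma cross3_eq_inner_smul_of_inner_eq_zero {n v w : ℝ³} (hn : ‖n‖ = 1)
    (hnv : ⟪n, v⟫ = 0) (hnw : ⟪n, w⟫ = 0) : cross3 v w = -⟪cross3 v n, w⟫ • n := by
  rw [← inner_cross3_cross3_left]
  refine eq_inner_smul_of_cross3_eq_zero hn ?_
  rw [cross3_cross3, hnw, real_inner_comm, hnv, zero_smul, zero_smul, sub_zero]

lemma HasDerivAt.cross3 {f g : ℝ → ℝ³} {f' g' : ℝ³} {x : ℝ}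
    (hf : HasDerivAt f f' x) (hg : HasDerivAt g g' x) :
    HasDerivAt (fun s => cross3 (f s) (g s)) (cross3 f' (g x) + cross3 (f x) g') x := by
  simpa only [cross3CLM_apply, add_comm] using
    cross3CLM.hasDerivAt_of_bilinear (fun _ => hf) (fun _ => hg)

lemma HasDerivAt.inner_eq_zero_of_eventually_norm_eq {F : Type*} [NormedAddCommGroup F]
    [InnerProductSpace ℝ F] {f : ℝ → F} {f' : F} {x c : ℝ} (hf : HasDerivAt f f' x)
    (hc : ∀ᶠ s in nhds x, ‖f s‖ = c) : ⟪f x, f'⟫ = 0 := by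
  have hconst : HasDerivAt (‖f ·‖ ^ 2) 0 x :=
    (hasDerivAt_const x (c ^ 2)).congr_of_eventuallyEq (hc.mono fun s hs => by simp only [hs])
  linarith [hf.norm_sq.unique hconst]

lemma norm_nor {p_f : ℝ → ℝ³} {s : ℝ} (hk : curv p_f s ≠ 0) : ‖nor p_f s‖ = 1 :=
  norm_smul_inv_norm (norm_ne_zero_iff.mp hk)

lemma curv_smul_nor {p_f : ℝ → ℝ³} {s : ℝ} (hk : curv p_f s ≠ 0) :
    curv p_f s • nor p_f s = deriv (deriv p_f) s := by
  rw [nor, smul_smul, mul_inv_cancel₀ hk, one_smul]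

lemma inner_tang_nor {p_f : ℝ → ℝ³} {s : ℝ}
    (hunit : ∀ s : ℝ, ‖deriv p_f s‖ = 1) (ht : DifferentiableAt ℝ (deriv p_f) s) :
    ⟪nor p_f s, tang p_f s⟫ = 0 := by
  rw [nor, tang, real_inner_smul_left, real_inner_comm,
    ht.hasDerivAt.inner_eq_zero_of_eventually_norm_eq (.of_forall hunit), mul_zero]

theorem serret_frenet_binormal_derivative_general
    (p_f : ℝ → EuclideanSpace ℝ (Fin 3)) (s₀ : ℝ)
    (hd2 : ∀ᶠ s in nhds s₀, DifferentiableAt ℝ (deriv p_f) s)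
    (hunit : ∀ s : ℝ, ‖deriv p_f s‖ = 1)
    (hk : ∀ᶠ s in nhds s₀, curv p_f s ≠ 0)
    (hn : DifferentiableAt ℝ (nor p_f) s₀) :
    DifferentiableAt ℝ (binor p_f) s₀ ∧
      deriv (binor p_f) s₀ = (-(tors p_f s₀)) • nor p_f s₀ := by
  have ht := hd2.self_of_nhds
  have hb : HasDerivAt (binor p_f) (cross3 (deriv (deriv p_f) s₀) (nor p_f s₀) +
      cross3 (tang p_f s₀) (deriv (nor p_f) s₀)) s₀ :=
    ht.hasDerivAt.cross3 hn.hasDerivAt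
  have hnn' : ⟪nor p_f s₀, deriv (nor p_f) s₀⟫ = 0 :=
    hn.hasDerivAt.inner_eq_zero_of_eventually_norm_eq (hk.mono fun _ => norm_nor)
  refine ⟨hb.differentiableAt, ?_⟩
  rw [hb.deriv, ← curv_smul_nor hk.self_of_nhds, cross3_smul_self, zero_add,
    cross3_eq_inner_smul_of_inner_eq_zero (norm_nor hk.self_of_nhds) (inner_tang_nor hunit ht) hnn',
    tors, binor]

theorem serret_frenet_binormal_derivative
    (p_f : ℝ → EuclideanSpace ℝ (Fin 3)) (s₀ : ℝ)
    (hd1 : ∀ᶠ s in nhds s₀, DifferentiableAt ℝ p_f s)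
    (hd2 : ∀ᶠ s in nhds s₀, DifferentiableAt ℝ (deriv p_f) s)
    (hunit : ∀ s : ℝ, ‖deriv p_f s‖ = 1)
    (hk : ∀ᶠ s in nhds s₀, curv p_f s ≠ 0)
    (hn : DifferentiableAt ℝ (nor p_f) s₀) :
    DifferentiableAt ℝ (binor p_f) s₀ ∧
      deriv (binor p_f) s₀ = (-(tors p_f s₀)) • nor p_f s₀ :=
  serret_frenet_binormal_derivative_general p_f s₀ hd2 hunit hk hn
end

section
/- Let p_f : ℝ → EuclideanSpace ℝ (Fin 3) satisfy ‖p_f'(s)‖ = 1 for all s, with p_f' differentiable at s₀ := s_f(t₀) and k(s₀) := ‖p_f''(s₀)‖ ≠ 0. Let p : ℝ → ℝ³ be differentiable at t₀ with v(t₀) := p'(t₀), let s_f : ℝ → ℝ be differentiable at t₀, and assume the transversality condition ⟪t(s_f(t)), p(t) − p_f(s_f(t))⟫ = 0 holds for all t in a neighborhood of t₀. If 1 − k(s₀) w₁(t₀) ≠ 0, where w₁(t₀) := ⟪n(s₀), p(t₀) − p_f(s₀)⟫, then s_f'(t₀) = ⟪t(s₀), v(t₀)⟫ / (1 − k(s₀)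 w₁(t₀)). -/
open scoped RealInnerProductSpace Matrix

/-- First transverse coordinate `w₁(t) = ⟪n(s_f(t)), p(t) − p_f(s_f(t))⟫`. -/
noncomputable def w1 (p_f p : ℝ → EuclideanSpace ℝ (Fin 3)) (s_f : ℝ → ℝ) (t : ℝ) : ℝ :=
  ⟪nor p_f (s_f t), p t - p_f (s_f t)⟫

/-- Second transverse coordinate `w₂(t) = ⟪b(s_f(t)), p(t) − p_f(s_f(t))⟫`. -/
noncomputable def w2 (p_f p : ℝ → EuclideanSpace ℝ (Fin 3)) (s_f : ℝ → ℝ) (t : ℝ) : ℝ :=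
  ⟪binor p_f (s_f t), p t - p_f (s_f t)⟫

theorem arc_length_rate
    (p_f p : ℝ → EuclideanSpace ℝ (Fin 3)) (s_f : ℝ → ℝ) (t₀ : ℝ)
    (hunit : ∀ s : ℝ, ‖deriv p_f s‖ = 1)
    (hd2 : DifferentiableAt ℝ (deriv p_f) (s_f t₀))
    (hk : curv p_f (s_f t₀) ≠ 0)
    (hp : DifferentiableAt ℝ p t₀)
    (hsf : DifferentiableAt ℝ s_f t₀)
    (htrans : ∀ᶠ t in nhds t₀, ⟪tang p_f (s_f t), p t - p_f (s_f t)⟫ = 0)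
    (hden : 1 - curv p_f (s_f t₀) * w1 p_f p s_f t₀ ≠ 0) :
    deriv s_f t₀ =
      ⟪tang p_f (s_f t₀), deriv p t₀⟫ / (1 - curv p_f (s_f t₀) * w1 p_f p s_f t₀) := by
  set s₀ := s_f t₀ with hs₀
  set k := curv p_f s₀ with hkdef
  set A := deriv (deriv p_f) s₀ with hA
  set T₀ := deriv p_f s₀ with hT₀
  set s' := deriv s_f t₀ with hs'
  set v := deriv p t₀ with hv
  -- p_f is differentiable everywhere
  have hpf : ∀ s, DifferentiableAt ℝ p_f s := by
    intro s
    by_contra h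
    have := deriv_zero_of_not_differentiableAt h
    have h1 := hunit s
    rw [this] at h1
    simp at h1
  -- derivative of t ↦ deriv p_f (s_f t)
  have hT : HasDerivAt (fun t => deriv p_f (s_f t)) (s' • A) t₀ :=
    (hd2.hasDerivAt).scomp t₀ hsf.hasDerivAt
  -- derivative of t ↦ p t - p_f (s_f t)
  have hP : HasDerivAt (fun t => p t - p_f (s_f t)) (v - s' • T₀) t₀ :=
    hp.hasDerivAt.sub (((hpf s₀).hasDerivAt).scomp t₀ hsf.hasDerivAt)
  have hg : HasDerivAt (fun t => ⟪deriv p_f (s_f t), p t - p_f (s_f t)⟫)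
      (⟪deriv p_f (s_f t₀), v - s' • T₀⟫ + ⟪s' • A, p t₀ - p_f (s_f t₀)⟫) t₀ :=
    HasDerivAt.inner ℝ hT hP
  -- the function is eventually 0, hence its derivative is 0
  have heq : (fun t => ⟪deriv p_f (s_f t), p t - p_f (s_f t)⟫) =ᶠ[nhds t₀]
      (fun _ => (0 : ℝ)) := htrans.mono fun t ht => ht
  have hzero : HasDerivAt (fun _ : ℝ => (0 : ℝ)) 0 t₀ := hasDerivAt_const t₀ 0
  have hD : (⟪deriv p_f (s_f t₀), v - s' • T₀⟫ + ⟪s' • A, p t₀ - p_f (s_f t₀)⟫ : ℝ) = 0 := by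
    have := (heq.hasDerivAt_iff.mp hg).unique hzero
    exact this
  -- simplify the inner products
  have hkw : (⟪A, p t₀ - p_f s₀⟫ : ℝ) = k * w1 p_f p s_f t₀ := by
    have : w1 p_f p s_f t₀ = k⁻¹ * ⟪A, p t₀ - p_f s₀⟫ := by
      simp only [w1, nor, ← hs₀, ← hA, ← hkdef, real_inner_smul_left]
    rw [this]
    field_simp
  have hTT : (⟪T₀, T₀⟫ : ℝ) = 1 := by
    rw [real_inner_self_eq_norm_sq, hT₀, hunit s₀]; norm_num
  rw [inner_sub_right, real_inner_smul_left, real_inner_smul_right] at hD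
  rw [← hT₀] at hD
  rw [hTT, hkw] at hD
  have : s' * (1 - k * w1 p_f p s_f t₀) = ⟪T₀, v⟫ := by ring_nf; ring_nf at hD; linarith
  rw [tang, ← hT₀]
  rw [eq_div_iff hden]
  linarith
end

section
/- Under the transverse-coordinate setup (arc-length frame path p_f with ‖p_f'‖ ≡ 1, p_f' differentiable at s₀ := s_f(t₀), k(s₀) := ‖p_f''(s₀)‖ ≠ 0; s_f differentiable at t₀; transversality ⟪t(s_f(t)), p(t) − p_f(s_f(t))⟫ = 0 near t₀), let p be differentiable near t₀ with velocity v := p' differentiable at t₀, and let v̄ : ℝ → ℝ³ be differentiable at s₀ with v̄(s_f(t)) = v(t) for all t near t₀. If ⟪t(s₀), v(t₀)⟫ ≠ 0 and 1 − k(s₀) w₁(t₀) ≠ 0, then v̄'(s₀) = ((1 − k(s₀) w₁(t₀)) / ⟪t(s₀), v(t₀)⟫) • v'(t₀); i.e. the arc-length derivative of the velocity equals the acceleration scaled by (1 − k w₁)/⟪t, v⟫. -/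
open scoped RealInnerProductSpace Matrix

/-!
Differentiating the transversality constraint `⟪t ∘ s_f, p - p_f ∘ s_f⟫ = 0` at `t₀`, with
`⟪t, t⟫ = 1` and `t' = k n`, gives `s_f'(t₀) (1 - k w₁) = ⟪t, v⟫`. The chain rule applied to
`v̄ ∘ s_f = v` gives `s_f'(t₀) • v̄'(s₀) = v'(t₀)`, and dividing the second identity by the first
yields the claim.
-/

section InnerProductSpace

variable {E : Type*} [NormedAddCommGroup E] [InnerProductSpace ℝ E]

theorem real_inner_eq_norm_mul_inner_normalize (x y : E) : ⟪x, y⟫ = ‖x‖ * ⟪‖x‖⁻¹ • x, y⟫ := by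
  rcases eq_or_ne ‖x‖ 0 with hx | hx
  · simp [norm_eq_zero.mp hx]
  · rw [real_inner_smul_left, mul_inv_cancel_left₀ hx]

theorem deriv_mul_one_sub_inner_eq_inner_of_orthogonal {f p : ℝ → E} {φ : ℝ → ℝ} {t₀ : ℝ}
    (hf : DifferentiableAt ℝ f (φ t₀)) (hf' : DifferentiableAt ℝ (deriv f) (φ t₀))
    (hunit : ‖deriv f (φ t₀)‖ = 1) (hp : DifferentiableAt ℝ p t₀)
    (hφ : DifferentiableAt ℝ φ t₀)
    (horth : ∀ᶠ t in nhds t₀, ⟪deriv f (φ t), p t - f (φ t)⟫ = 0) :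
    deriv φ t₀ * (1 - ⟪deriv (deriv f) (φ t₀), p t₀ - f (φ t₀)⟫) =
      ⟪deriv f (φ t₀), deriv p t₀⟫ := by
  have htangent : HasDerivAt (fun t => deriv f (φ t)) (deriv φ t₀ • deriv (deriv f) (φ t₀)) t₀ :=
    hf'.hasDerivAt.scomp t₀ hφ.hasDerivAt
  have hoffset :
      HasDerivAt (fun t => p t - f (φ t)) (deriv p t₀ - deriv φ t₀ • deriv f (φ t₀)) t₀ :=
    hp.hasDerivAt.sub (hf.hasDerivAt.scomp t₀ hφ.hasDerivAt)
  have hzero : deriv (fun t => ⟪deriv f (φ t), p t - f (φ t)⟫) t₀ = 0 := by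
    rw [Filter.EventuallyEq.deriv_eq horth]
    exact deriv_const _ _
  have hTT : ⟪deriv f (φ t₀), deriv f (φ t₀)⟫ = 1 := by
    rw [real_inner_self_eq_norm_sq, hunit, one_pow]
  rw [(htangent.inner ℝ hoffset).deriv, inner_sub_right, real_inner_smul_right,
    real_inner_smul_left, hTT] at hzero
  linarith

end InnerProductSpace

theorem deriv_smul_deriv_comp_of_eventuallyEq {F : Type*} [NormedAddCommGroup F]
    [NormedSpace ℝ F] {g h : ℝ → F} {φ : ℝ → ℝ} {t₀ : ℝ}
    (hg : DifferentiableAt ℝ g (φ t₀)) (hφ : DifferentiableAt ℝ φ t₀)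
    (hgh : ∀ᶠ t in nhds t₀, g (φ t) = h t) :
    deriv φ t₀ • deriv g (φ t₀) = deriv h t₀ := by
  rw [← deriv.scomp t₀ hg hφ]
  exact Filter.EventuallyEq.deriv_eq hgh

theorem eq_div_smul_of_smul_eq_of_mul_eq {K F : Type*} [Field K] [AddCommGroup F] [Module K F]
    {a c d : K} {x y : F} (hxy : a • x = y) (hcd : a * c = d) (hd : d ≠ 0) :
    x = (c / d) • y := by
  subst hxy hcd
  have hc : c ≠ 0 := right_ne_zero_of_mul hd
  have ha : a ≠ 0 := left_ne_zero_of_mul hd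
  rw [smul_smul, show c / (a * c) * a = 1 by field_simp, one_smul]

theorem curv_mul_w1 (p_f p : ℝ → EuclideanSpace ℝ (Fin 3)) (s_f : ℝ → ℝ) (t : ℝ) :
    curv p_f (s_f t) * w1 p_f p s_f t = ⟪deriv (deriv p_f) (s_f t), p t - p_f (s_f t)⟫ :=
  (real_inner_eq_norm_mul_inner_normalize _ _).symm

theorem spatial_velocity_dynamics_general
    (p_f p : ℝ → EuclideanSpace ℝ (Fin 3)) (s_f : ℝ → ℝ)
    (vb : ℝ → EuclideanSpace ℝ (Fin 3)) (t₀ : ℝ)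
    (hunit : ∀ s : ℝ, ‖deriv p_f s‖ = 1)
    (hd2 : DifferentiableAt ℝ (deriv p_f) (s_f t₀))
    (hp : ∀ᶠ t in nhds t₀, DifferentiableAt ℝ p t)
    (hsf : DifferentiableAt ℝ s_f t₀)
    (htrans : ∀ᶠ t in nhds t₀, ⟪tang p_f (s_f t), p t - p_f (s_f t)⟫ = 0)
    (hvb : DifferentiableAt ℝ vb (s_f t₀))
    (hcomp : ∀ᶠ t in nhds t₀, vb (s_f t) = deriv p t)
    (hvt : ⟪tang p_f (s_f t₀), deriv p t₀⟫ ≠ 0) :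
    deriv vb (s_f t₀) =
      ((1 - curv p_f (s_f t₀) * w1 p_f p s_f t₀) / ⟪tang p_f (s_f t₀), deriv p t₀⟫) •
        deriv (deriv p) t₀ := by
  have hpf : DifferentiableAt ℝ p_f (s_f t₀) :=
    differentiableAt_of_deriv_ne_zero (norm_ne_zero_iff.mp (by simp [hunit]))
  have hspeed : deriv s_f t₀ * (1 - curv p_f (s_f t₀) * w1 p_f p s_f t₀) =
      ⟪tang p_f (s_f t₀), deriv p t₀⟫ := by
    rw [curv_mul_w1]
    exact deriv_mul_one_sub_inner_eq_inner_of_orthogonal hpf hd2 (hunit _) hp.self_of_nhds hsf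
      htrans
  exact eq_div_smul_of_smul_eq_of_mul_eq (deriv_smul_deriv_comp_of_eventuallyEq hvb hsf hcomp)
    hspeed hvt

theorem spatial_velocity_dynamics
    (p_f p : ℝ → EuclideanSpace ℝ (Fin 3)) (s_f : ℝ → ℝ)
    (vb : ℝ → EuclideanSpace ℝ (Fin 3)) (t₀ : ℝ)
    (hunit : ∀ s : ℝ, ‖deriv p_f s‖ = 1)
    (hd2 : DifferentiableAt ℝ (deriv p_f) (s_f t₀))
    (hk : curv p_f (s_f t₀) ≠ 0)
    (hp : ∀ᶠ t in nhds t₀, DifferentiableAt ℝ p t)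
    (hv : DifferentiableAt ℝ (deriv p) t₀)
    (hsf : DifferentiableAt ℝ s_f t₀)
    (htrans : ∀ᶠ t in nhds t₀, ⟪tang p_f (s_f t), p t - p_f (s_f t)⟫ = 0)
    (hvb : DifferentiableAt ℝ vb (s_f t₀))
    (hcomp : ∀ᶠ t in nhds t₀, vb (s_f t) = deriv p t)
    (hvt : ⟪tang p_f (s_f t₀), deriv p t₀⟫ ≠ 0)
    (hden : 1 - curv p_f (s_f t₀) * w1 p_f p s_f t₀ ≠ 0) :
    deriv vb (s_f t₀) =
      ((1 - curv p_f (s_f t₀) * w1 p_f p s_f t₀) / ⟪tang p_f (s_f t₀), deriv p t₀⟫) •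
        deriv (deriv p) t₀ :=
  spatial_velocity_dynamics_general p_f p s_f vb t₀ hunit hd2 hp hsf htrans hvb hcomp hvt
end

section
/- Under the transverse-coordinate setup (arc-length frame path p_f with ‖p_f'‖ ≡ 1, p_f' differentiable at s₀ := s_f(t₀), k(s₀) := ‖p_f''(s₀)‖ ≠ 0; p differentiable at t₀ with v(t₀) := p'(t₀); s_f differentiable at t₀; transversality ⟪t(s_f(t)), p(t) − p_f(s_f(t))⟫ = 0 near t₀), let t̄_f : ℝ → ℝ be differentiable at s₀ and satisfy t̄_f(s_f(t)) = t for all t near t₀. If ⟪t(s₀), v(t₀)⟫ ≠ 0 and 1 − k(s₀) w₁(t₀) ≠ 0, then t̄_f'(s₀) = (1 − k(s₀) w₁(t₀)) / ⟪t(s₀), v(t₀)⟫. -/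
open scoped RealInnerProductSpace Matrix

theorem time_arc_length_rate
    (p_f p : ℝ → EuclideanSpace ℝ (Fin 3)) (s_f t_f : ℝ → ℝ) (t₀ : ℝ)
    (hunit : ∀ s : ℝ, ‖deriv p_f s‖ = 1)
    (hd2 : DifferentiableAt ℝ (deriv p_f) (s_f t₀))
    (hk : curv p_f (s_f t₀) ≠ 0)
    (hp : DifferentiableAt ℝ p t₀)
    (hsf : DifferentiableAt ℝ s_f t₀)
    (htrans : ∀ᶠ t in nhds t₀, ⟪tang p_f (s_f t), p t - p_f (s_f t)⟫ = 0)
    (htf : DifferentiableAt ℝ t_f (s_f t₀))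
    (hinv : ∀ᶠ t in nhds t₀, t_f (s_f t) = t)
    (hvt : ⟪tang p_f (s_f t₀), deriv p t₀⟫ ≠ 0)
    (hden : 1 - curv p_f (s_f t₀) * w1 p_f p s_f t₀ ≠ 0) :
    deriv t_f (s_f t₀) =
      (1 - curv p_f (s_f t₀) * w1 p_f p s_f t₀) / ⟪tang p_f (s_f t₀), deriv p t₀⟫ := by

  set s₀ := s_f t₀ with hs₀
  -- p_f is differentiable everywhere since its deriv has norm 1
  have hdpf : ∀ s, DifferentiableAt ℝ p_f s := by
    intro s
    by_contra h
    have := deriv_zero_of_not_differentiableAt h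
    have h1 := hunit s
    rw [this] at h1
    simp at h1
  -- chain rule on t_f ∘ s_f = id
  have hcomp : HasDerivAt (t_f ∘ s_f) (deriv t_f s₀ * deriv s_f t₀) t₀ :=
    (htf.hasDerivAt.comp t₀ hsf.hasDerivAt)
  have hid : deriv (t_f ∘ s_f) t₀ = deriv (id : ℝ → ℝ) t₀ := by
    apply Filter.EventuallyEq.deriv_eq
    filter_upwards [hinv] with t ht
    simpa using ht
  have h1 : deriv t_f s₀ * deriv s_f t₀ = 1 := by
    have := hcomp.deriv
    rw [hid] at this
    simpa using this.symm
  -- differentiate the transversality identity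
  have hA : HasDerivAt (fun t => deriv p_f (s_f t))
      (deriv s_f t₀ • deriv (deriv p_f) s₀) t₀ :=
    HasDerivAt.scomp t₀ hd2.hasDerivAt hsf.hasDerivAt
  have hB : HasDerivAt (fun t => p t - p_f (s_f t))
      (deriv p t₀ - deriv s_f t₀ • deriv p_f s₀) t₀ :=
    hp.hasDerivAt.sub (HasDerivAt.scomp t₀ (hdpf s₀).hasDerivAt hsf.hasDerivAt)
  have hg : HasDerivAt (fun t => ⟪deriv p_f (s_f t), p t - p_f (s_f t)⟫)
      (⟪deriv p_f s₀, deriv p t₀ - deriv s_f t₀ • deriv p_f s₀⟫ +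
        ⟪deriv s_f t₀ • deriv (deriv p_f) s₀, p t₀ - p_f s₀⟫) t₀ :=
    hA.inner ℝ hB
  have hg0 : deriv (fun t => ⟪deriv p_f (s_f t), p t - p_f (s_f t)⟫) t₀ = 0 := by
    have : (fun t => ⟪deriv p_f (s_f t), p t - p_f (s_f t)⟫) =ᶠ[nhds t₀]
        (fun _ => (0 : ℝ)) := by
      filter_upwards [htrans] with t ht
      simpa [tang] using ht
    rw [this.deriv_eq]
    simp
  have h2 : ⟪deriv p_f s₀, deriv p t₀ - deriv s_f t₀ • deriv p_f s₀⟫ +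
      ⟪deriv s_f t₀ • deriv (deriv p_f) s₀, p t₀ - p_f s₀⟫ = 0 := by
    rw [← hg.deriv]; exact hg0
  -- simplify the inner products
  have hself : ⟪deriv p_f s₀, deriv p_f s₀⟫ = 1 := by
    rw [real_inner_self_eq_norm_sq, hunit s₀]; norm_num
  have hw1 : ⟪deriv (deriv p_f) s₀, p t₀ - p_f s₀⟫ =
      curv p_f s₀ * w1 p_f p s_f t₀ := by
    have : w1 p_f p s_f t₀ = (curv p_f s₀)⁻¹ * ⟪deriv (deriv p_f) s₀, p t₀ - p_f s₀⟫ := by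
      unfold w1 nor
      rw [real_inner_smul_left]
    rw [this]
    field_simp
  rw [real_inner_smul_left, hw1, inner_sub_right, real_inner_smul_right, hself] at h2
  -- now it's algebra
  set σ := deriv s_f t₀
  set a := deriv t_f s₀
  set K := curv p_f s₀
  set W := w1 p_f p s_f t₀
  set V := ⟪deriv p_f s₀, deriv p t₀⟫ with hV
  have hVt : ⟪tang p_f s₀, deriv p t₀⟫ = V := rfl
  rw [hVt] at hvt ⊢
  have hσ : σ ≠ 0 := by
    intro h
    rw [h, mul_zero] at h1
    exact one_ne_zero h1.symm
  -- h2 : σ * (K * W) + (V - σ * 1) = 0, so σ * (1 - K*W) = V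
  have h3 : σ * (1 - K * W) = V := by linarith
  field_simp
  rw [← h3, ← mul_assoc, h1, one_mul]
end

section
/- Let T > 0 and L > 0. Assume: p_f : ℝ → EuclideanSpace ℝ (Fin 3) is twice continuously differentiable with ‖p_f'(s)‖ = 1 and k(s) := ‖p_f''(s)‖ ≠ 0 for all s ∈ [0, L]; p : ℝ → ℝ³ is continuously differentiable on [0, T] with velocity v := p'; s_f : ℝ → ℝ is continuously differentiable on [0, T] with s_f(0) = 0, s_f(T) = L, and for every t ∈ [0, T] the transversality condition ⟪t(s_f(t)), p(t) − p_f(s_f(t))⟫ = 0 holds, 1 − k(s_f(t)) w₁(t) ≠ 0, and s_f'(t) = ⟪t(s_f(t)), v(t)⟫ / (1 − k(s_f(t)) w₁(t)) > 0. Let t̄_f : [0, L] → [0, T] be the inverse of s_f on [0, T]. Then T = ∫₀^L (1 − k(s) w₁(t̄_f(s))) / ⟪t(s), v(t̄_f(s))⟫ ds. -/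
open scoped RealInnerProductSpace Matrix

theorem minimum_time_cost_reformulation
    (T L : ℝ) (hT : 0 < T) (hL : 0 < L)
    (p_f p : ℝ → EuclideanSpace ℝ (Fin 3)) (s_f t_f : ℝ → ℝ)
    (hpf : ContDiff ℝ 2 p_f)
    (hunit : ∀ s ∈ Set.Icc (0 : ℝ) L, ‖deriv p_f s‖ = 1)
    (hk : ∀ s ∈ Set.Icc (0 : ℝ) L, curv p_f s ≠ 0)
    (hp : ∀ t ∈ Set.Icc (0 : ℝ) T, DifferentiableAt ℝ p t)
    (hv : ContinuousOn (deriv p) (Set.Icc (0 : ℝ) T))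
    (hsfd : ∀ t ∈ Set.Icc (0 : ℝ) T, DifferentiableAt ℝ s_f t)
    (hsfc : ContinuousOn (deriv s_f) (Set.Icc (0 : ℝ) T))
    (hsf0 : s_f 0 = 0) (hsfT : s_f T = L)
    (htrans : ∀ t ∈ Set.Icc (0 : ℝ) T, ⟪tang p_f (s_f t), p t - p_f (s_f t)⟫ = 0)
    (hden : ∀ t ∈ Set.Icc (0 : ℝ) T, 1 - curv p_f (s_f t) * w1 p_f p s_f t ≠ 0)
    (hrate : ∀ t ∈ Set.Icc (0 : ℝ) T,
      deriv s_f t =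
        ⟪tang p_f (s_f t), deriv p t⟫ / (1 - curv p_f (s_f t) * w1 p_f p s_f t) ∧
      0 < deriv s_f t)
    (hinv : ∀ t ∈ Set.Icc (0 : ℝ) T, t_f (s_f t) = t) :
    T = ∫ s in (0 : ℝ)..L,
        (1 - curv p_f s * w1 p_f p s_f (t_f s)) / ⟪tang p_f s, deriv p (t_f s)⟫ := by
  classical
  set I : Set ℝ := Set.Icc (0 : ℝ) T with hI
  have hIT : Set.uIcc (0 : ℝ) T = I := Set.uIcc_of_le hT.le
  have hcontsf : ContinuousOn s_f I := fun t ht => (hsfd t ht).continuousAt.continuousWithinAt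
  -- strict monotonicity of s_f on I
  have hmono : StrictMonoOn s_f I := by
    apply strictMonoOn_of_deriv_pos (convex_Icc _ _) hcontsf
    intro x hx
    rw [interior_Icc] at hx
    exact (hrate x ⟨hx.1.le, hx.2.le⟩).2
  -- image of I under s_f is [0, L]
  have himg : s_f '' I = Set.Icc (0 : ℝ) L := by
    apply Set.Subset.antisymm
    · rintro _ ⟨t, ht, rfl⟩
      constructor
      · rw [← hsf0]
        exact hmono.monotoneOn (Set.left_mem_Icc.2 hT.le) ht ht.1
      · rw [← hsfT]
        exact hmono.monotoneOn ht (Set.right_mem_Icc.2 hT.le) ht.2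
    · have := intermediate_value_Icc hT.le hcontsf
      rwa [hsf0, hsfT] at this
  -- the integrand
  set g : ℝ → ℝ := fun s =>
    (1 - curv p_f s * w1 p_f p s_f (t_f s)) / ⟪tang p_f s, deriv p (t_f s)⟫ with hg
  -- key pointwise identity
  have hkey : ∀ t ∈ I, deriv s_f t * g (s_f t) = 1 := by
    intro t ht
    obtain ⟨hr, hpos⟩ := hrate t ht
    have hinner : ⟪tang p_f (s_f t), deriv p t⟫ ≠ 0 := by
      intro h
      rw [h, zero_div] at hr
      exact hpos.ne' hr
    have hgval : g (s_f t) =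
        (1 - curv p_f (s_f t) * w1 p_f p s_f t) / ⟪tang p_f (s_f t), deriv p t⟫ := by
      simp only [hg, hinv t ht]
    rw [hgval, hr, div_mul_div_comm,
      mul_comm (1 - curv p_f (s_f t) * w1 p_f p s_f t),
      div_self (mul_ne_zero hinner (hden t ht))]
  -- continuity of t_f on [0, L] via the order isomorphism
  have htf_mem : ∀ s ∈ Set.Icc (0 : ℝ) L, ∃ t ∈ I, s_f t = s ∧ t_f s = t := by
    intro s hs
    rw [← himg] at hs
    obtain ⟨t, ht, rfl⟩ := hs
    exact ⟨t, ht, rfl, hinv t ht⟩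
  have hconttf : ContinuousOn t_f (Set.Icc (0 : ℝ) L) := by
    let e : I ≃o (Set.Icc (0 : ℝ) L) :=
      (StrictMonoOn.orderIso s_f I hmono).trans (OrderIso.setCongr _ _ himg)
    have hsymm : Continuous (fun x : Set.Icc (0 : ℝ) L => ((e.symm x : I) : ℝ)) :=
      continuous_subtype_val.comp e.symm.continuous
    rw [continuousOn_iff_continuous_restrict]
    convert hsymm using 1
    funext x
    obtain ⟨t, ht, hst, htf⟩ := htf_mem x x.2
    have hex : e ⟨t, ht⟩ = x := by
      apply Subtype.ext
      exact hst
    have : e.symm x = ⟨t, ht⟩ := by rw [← hex, OrderIso.symm_apply_apply]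
    simp [Set.restrict_apply, htf, this]
  -- continuity of g on [0, L]
  have hcontg : ContinuousOn g (Set.Icc (0 : ℝ) L) := by
    have : ContinuousOn (fun s => (deriv s_f (t_f s))⁻¹) (Set.Icc (0 : ℝ) L) := by
      apply ContinuousOn.inv₀
      · apply hsfc.comp hconttf
        intro s hs
        obtain ⟨t, ht, _, htf⟩ := htf_mem s hs
        rw [htf]; exact ht
      · intro s hs
        obtain ⟨t, ht, _, htf⟩ := htf_mem s hs
        rw [htf]
        exact (hrate t ht).2.ne'
    apply this.congr
    intro s hs
    obtain ⟨t, ht, hst, htf⟩ := htf_mem s hs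
    have h1 := hkey t ht
    have h2 := (hrate t ht).2.ne'
    rw [hst] at h1
    show g s = (deriv s_f (t_f s))⁻¹
    rw [htf]
    exact eq_inv_of_mul_eq_one_right h1
  -- change of variables
  have hcov :
      (∫ x in (0 : ℝ)..T, deriv s_f x • g (s_f x)) = ∫ u in (s_f 0)..(s_f T), g u := by
    apply intervalIntegral.integral_comp_smul_deriv'
      (f := s_f) (f' := deriv s_f) (g := g)
    · intro x hx
      rw [hIT] at hx
      exact (hsfd x hx).hasDerivAt
    · rw [hIT]; exact hsfc
    · rw [hIT, himg]; exact hcontg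
  rw [hsf0, hsfT] at hcov
  have hleft : (∫ x in (0 : ℝ)..T, deriv s_f x • g (s_f x)) = T := by
    have : ∀ x ∈ Set.uIcc (0 : ℝ) T, deriv s_f x • g (s_f x) = (1 : ℝ) := by
      intro x hx
      rw [hIT] at hx
      simpa [smul_eq_mul] using hkey x hx
    rw [intervalIntegral.integral_congr this]
    simp
  rw [← hleft, hcov]
end
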